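/- Let k be a ring and A a k-algebra. Suppose δ_1, …, δ_r ∈ Der_k(A) leap at s_1 < … < s_r respectively, and suppose there is a maximal ideal m ⊂ A and a positive integer N with m^N Der_k(A) ⊆ IDer_k(A). Let M_m = { Σ_{i=1}^r λ_i δ_i : each λ_i ∈ (A \\ m) ∪ {0} }. Then every δ ∈ M_m that leaps, leaps at one of s_1, …, s_r. -/

import Mathlib

open scoped BigOperators

section HS
variable (k A : Type*) [CommRing k] [CommRing A] [Algebra k A]

/-- `D` is a Hasse–Schmidt derivation of `A` over `k` of length `m`
(`m = ⊤` means length `∞`): `D 0 = id` and the Leibniz rule holds in each degree `≤ m`. -/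
def IsHSDeriv (m : ℕ∞) (D : ℕ → A →ₗ[k] A) : Prop :=
  D 0 = LinearMap.id ∧
  ∀ α : ℕ, (α : ℕ∞) ≤ m → ∀ x y : A,
    D α (x * y) = ∑ ij ∈ Finset.HasAntidiagonal.antidiagonal α, D ij.1 x * D ij.2 y

/-- A derivation is `m`-integrable if it extends to a Hasse–Schmidt derivation of length `m`. -/
def IsIntegrable (m : ℕ∞) (δ : Derivation k A A) : Prop :=
  ∃ D : ℕ → A →ₗ[k] A, IsHSDeriv k A m D ∧ D 1 = δ.toLinearMap

/-- The set of leaps of `A` over `k`: those `s ≥ 2` where some derivation is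
`(s-1)`-integrable but not `s`-integrable. -/
def LeapSet : Set ℕ :=
  {s | 2 ≤ s ∧ ∃ δ : Derivation k A A,
    IsIntegrable k A ((s - 1 : ℕ) : ℕ∞) δ ∧ ¬ IsIntegrable k A (s : ℕ∞) δ}

end HS

section Helpers
variable {k A : Type*} [CommRing k] [CommRing A] [Algebra k A]

lemma isIntegrable_mono {m m' : ℕ∞} (h : m' ≤ m) {δ : Derivation k A A}
    (hδ : IsIntegrable k A m δ) : IsIntegrable k A m' δ := by
  obtain ⟨D, ⟨h0, hL⟩, h1⟩ := hδ
  exact ⟨D, ⟨h0, fun α hα => hL α (hα.trans h)⟩, h1⟩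

lemma isIntegrable_zero (m : ℕ∞) : IsIntegrable k A m (0 : Derivation k A A) := by
  refine ⟨fun n => if n = 0 then LinearMap.id else 0, ⟨by simp, ?_⟩, by simp⟩
  intro α _ x y
  rcases Nat.eq_zero_or_pos α with h | h
  · subst h; simp
  · simp only [if_neg h.ne', LinearMap.zero_apply]
    symm
    apply Finset.sum_eq_zero
    intro ij hij
    rw [Finset.HasAntidiagonal.mem_antidiagonal] at hij
    rcases Nat.eq_zero_or_pos ij.1 with h1 | h1
    · have : ij.2 ≠ 0 := by omega
      simp [this]
    · simp [h1.ne']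

lemma isIntegrable_smul {m : ℕ∞} (a : A) {δ : Derivation k A A}
    (hδ : IsIntegrable k A m δ) : IsIntegrable k A m (a • δ) := by
  obtain ⟨D, ⟨h0, hL⟩, h1⟩ := hδ
  refine ⟨fun n => a ^ n • D n, ⟨by simp [h0], ?_⟩, ?_⟩
  · intro α hα x y
    simp only [LinearMap.smul_apply, smul_eq_mul]
    rw [hL α hα x y, Finset.mul_sum]
    apply Finset.sum_congr rfl
    intro ij hij
    rw [Finset.HasAntidiagonal.mem_antidiagonal] at hij
    show _ = (a ^ ij.1 • D ij.1) x * (a ^ ij.2 • D ij.2) y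
    simp only [LinearMap.smul_apply, smul_eq_mul]
    rw [← hij, pow_add]
    ring
  · show a ^ 1 • D 1 = _
    rw [pow_one, h1]
    ext x
    exact rfl

lemma quad_sum {M : Type*} [AddCommMonoid M] (α : ℕ) (F : ℕ → ℕ → ℕ → ℕ → M) :
    ∑ ij ∈ Finset.HasAntidiagonal.antidiagonal α, ∑ uv ∈ Finset.HasAntidiagonal.antidiagonal ij.2,
      ∑ pq ∈ Finset.HasAntidiagonal.antidiagonal ij.1, F pq.1 pq.2 uv.1 uv.2
    = ∑ ab ∈ Finset.HasAntidiagonal.antidiagonal α, ∑ pu ∈ Finset.HasAntidiagonal.antidiagonal ab.1,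
      ∑ qv ∈ Finset.HasAntidiagonal.antidiagonal ab.2, F pu.1 qv.1 pu.2 qv.2 := by
  simp only [Finset.sum_sigma']
  refine Finset.sum_nbij'
    (i := fun x => ⟨(x.2.2.1 + x.2.1.1, x.2.2.2 + x.2.1.2), ⟨(x.2.2.1, x.2.1.1), (x.2.2.2, x.2.1.2)⟩⟩)
    (j := fun x => ⟨(x.2.1.1 + x.2.2.1, x.2.1.2 + x.2.2.2), ⟨(x.2.1.2, x.2.2.2), (x.2.1.1, x.2.2.1)⟩⟩)
    ?_ ?_ ?_ ?_ ?_
  · rintro ⟨⟨i, j⟩, ⟨u, v⟩, ⟨p, q⟩⟩ hx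
    simp only [Finset.mem_sigma, Finset.HasAntidiagonal.mem_antidiagonal, and_true] at hx ⊢
    omega
  · rintro ⟨⟨a, b⟩, ⟨p, u⟩, ⟨q, v⟩⟩ hx
    simp only [Finset.mem_sigma, Finset.HasAntidiagonal.mem_antidiagonal, and_true] at hx ⊢
    omega
  · rintro ⟨⟨i, j⟩, ⟨u, v⟩, ⟨p, q⟩⟩ hx
    simp only [Finset.mem_sigma, Finset.HasAntidiagonal.mem_antidiagonal] at hx
    obtain ⟨h1, h2, h3⟩ := hx
    subst h2; subst h3; rfl
  · rintro ⟨⟨a, b⟩, ⟨p, u⟩, ⟨q, v⟩⟩ hx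
    simp only [Finset.mem_sigma, Finset.HasAntidiagonal.mem_antidiagonal] at hx
    obtain ⟨h1, h2, h3⟩ := hx
    subst h2; subst h3; rfl
  · rintro ⟨⟨i, j⟩, ⟨u, v⟩, ⟨p, q⟩⟩ _
    rfl

lemma isIntegrable_add {m : ℕ∞} {δ ε : Derivation k A A}
    (hδ : IsIntegrable k A m δ) (hε : IsIntegrable k A m ε) :
    IsIntegrable k A m (δ + ε) := by
  obtain ⟨D, ⟨hD0, hDL⟩, hD1⟩ := hδ
  obtain ⟨E, ⟨hE0, hEL⟩, hE1⟩ := hε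
  refine ⟨fun n => ∑ ij ∈ Finset.HasAntidiagonal.antidiagonal n, D ij.1 ∘ₗ E ij.2, ⟨?_, ?_⟩, ?_⟩
  · simp [hD0, hE0]
  · intro α hα x y
    simp only [LinearMap.coe_sum, Finset.sum_apply, LinearMap.comp_apply]
    have step1 : ∀ ij ∈ Finset.HasAntidiagonal.antidiagonal α,
        D ij.1 (E ij.2 (x * y)) =
          ∑ uv ∈ Finset.HasAntidiagonal.antidiagonal ij.2, ∑ pq ∈ Finset.HasAntidiagonal.antidiagonal ij.1,
            D pq.1 (E uv.1 x) * D pq.2 (E uv.2 y) := by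
      intro ij hij
      rw [Finset.HasAntidiagonal.mem_antidiagonal] at hij
      have hj : ((ij.2 : ℕ) : ℕ∞) ≤ m :=
        le_trans (by exact_mod_cast Nat.cast_le.mpr (by omega : ij.2 ≤ α)) hα
      have hi : ((ij.1 : ℕ) : ℕ∞) ≤ m :=
        le_trans (by exact_mod_cast Nat.cast_le.mpr (by omega : ij.1 ≤ α)) hα
      rw [hEL ij.2 hj x y, map_sum]
      exact Finset.sum_congr rfl fun uv _ => hDL ij.1 hi _ _
    rw [Finset.sum_congr rfl step1, quad_sum α (fun p q u v => D p (E u x) * D q (E v y))]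
    apply Finset.sum_congr rfl
    intro ab _
    rw [Finset.sum_mul_sum]
  · show ∑ ij ∈ Finset.HasAntidiagonal.antidiagonal 1, D ij.1 ∘ₗ E ij.2 = _
    rw [Finset.Nat.sum_antidiagonal_eq_sum_range_succ_mk]
    rw [Finset.sum_range_succ, Finset.sum_range_one]
    ext x
    simp [hD0, hE0, hD1, hE1, add_comm]

lemma isIntegrable_sum {m : ℕ∞} {ι : Type*} (T : Finset ι) (f : ι → Derivation k A A)
    (hf : ∀ i ∈ T, IsIntegrable k A m (f i)) :
    IsIntegrable k A m (∑ i ∈ T, f i) := by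
  classical
  induction T using Finset.induction_on with
  | empty => simpa using isIntegrable_zero m
  | @insert a T ha ih =>
    rw [Finset.sum_insert ha]
    exact isIntegrable_add (hf a (by simp)) (ih fun i hi => hf i (by simp [hi]))

lemma isIntegrable_neg {m : ℕ∞} {δ : Derivation k A A}
    (hδ : IsIntegrable k A m δ) : IsIntegrable k A m (-δ) := by
  have := isIntegrable_smul (-1 : A) hδ
  rwa [neg_one_smul] at this

lemma isIntegrable_sub {m : ℕ∞} {δ ε : Derivation k A A}
    (hδ : IsIntegrable k A m δ) (hε : IsIntegrable k A m ε) :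
    IsIntegrable k A m (δ - ε) := by
  rw [sub_eq_add_neg]
  exact isIntegrable_add hδ (isIntegrable_neg hε)

lemma isIntegrable_of_smul_notMem {m : ℕ∞} {𝔪 : Ideal A} (h𝔪 : 𝔪.IsMaximal) {N : ℕ}
    (hN : 1 ≤ N)
    (hint : ∀ a ∈ 𝔪 ^ N, ∀ d : Derivation k A A, IsIntegrable k A ⊤ (a • d))
    {lam : A} (hlam : lam ∉ 𝔪) {δ : Derivation k A A}
    (h : IsIntegrable k A m (lam • δ)) : IsIntegrable k A m δ := by
  have htop : 𝔪 ^ N ⊔ Ideal.span {lam} = ⊤ := by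
    by_contra hne
    obtain ⟨𝔫, h𝔫, hle⟩ := Ideal.exists_le_maximal _ hne
    have h1 : 𝔪 ^ N ≤ 𝔫 := le_trans le_sup_left hle
    have h2 : 𝔪 ≤ 𝔫 := (h𝔫.isPrime.pow_le_iff (by omega)).mp h1
    have h3 : 𝔪 = 𝔫 := h𝔪.eq_of_le h𝔫.ne_top h2
    exact hlam (h3 ▸ (le_trans le_sup_right hle) (Ideal.mem_span_singleton_self lam))
  have h1 : (1 : A) ∈ 𝔪 ^ N ⊔ Ideal.span {lam} := htop ▸ Submodule.mem_top
  obtain ⟨μ, hμ, y, hy, hsum1⟩ := Submodule.mem_sup.mp h1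
  obtain ⟨a, rfl⟩ := Ideal.mem_span_singleton'.mp hy
  have hδeq : δ = μ • δ + a • (lam • δ) := by
    rw [smul_smul, ← add_smul, hsum1, one_smul]
  rw [hδeq]
  exact isIntegrable_add (isIntegrable_mono le_top (hint μ hμ δ)) (isIntegrable_smul a h)

end Helpers


section Leaps
variable (k A : Type*) [CommRing k] [CommRing A] [Algebra k A]

/-- A derivation leaps at `s` if it is `(s-1)`-integrable but not `s`-integrable. -/
def LeapsAt (s : ℕ) (δ : Derivation k A A) : Prop :=
  IsIntegrable k A ((s - 1 : ℕ) : ℕ∞) δ ∧ ¬ IsIntegrable k A (s : ℕ∞) δ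

/-- **Leaps of combinations with coefficients outside a maximal ideal.**  Suppose
`δ₁, …, δᵣ` leap at `s₁ < … < sᵣ`, and there are a maximal ideal `𝔪 ⊂ A` and `N ≥ 1`
with `𝔪^N · Der_k(A) ⊆ IDer_k(A)`.  Then any derivation `∑ λᵢ δᵢ`, with each
`λᵢ ∈ (A \ 𝔪) ∪ {0}`, that leaps, leaps at one of `s₁, …, sᵣ`. -/
theorem leaps_of_combinations_outside_maximal_ideal
    (r : ℕ) (δ : Fin r → Derivation k A A) (s : Fin r → ℕ)
    (hs2 : ∀ i, 2 ≤ s i) (hmono : StrictMono s)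
    (hleap : ∀ i, LeapsAt k A (s i) (δ i))
    (𝔪 : Ideal A) (h𝔪 : 𝔪.IsMaximal) (N : ℕ) (hN : 1 ≤ N)
    (hint : ∀ a ∈ 𝔪 ^ N, ∀ d : Derivation k A A, IsIntegrable k A ⊤ (a • d))
    (d : Derivation k A A)
    (lam : Fin r → A) (hlam : ∀ i, lam i ∉ 𝔪 ∨ lam i = 0)
    (hsum : d = ∑ i, lam i • δ i)
    (t : ℕ) (ht : 2 ≤ t) (hdt : LeapsAt k A t d) :
    ∃ i, t = s i := by
  classical
  set J := Finset.univ.filter (fun i => lam i ≠ 0) with hJ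
  have hdJ : d = ∑ i ∈ J, lam i • δ i := by
    rw [hsum]
    symm
    apply Finset.sum_subset (Finset.subset_univ _)
    intro i _ hiJ
    have : lam i = 0 := by simpa [hJ] using hiJ
    simp [this]
  rcases J.eq_empty_or_nonempty with hJe | hJne
  · exfalso
    apply hdt.2
    rw [hdJ, hJe, Finset.sum_empty]
    exact isIntegrable_zero _
  · obtain ⟨j, hjJ, hjmin⟩ := J.exists_min_image s hJne
    by_cases hts : t = s j
    · exact ⟨j, hts⟩
    rcases lt_or_gt_of_ne hts with hlt | hgt
    · -- t < s j ≤ s i for all i ∈ J : d is t-integrable, contradiction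
      exfalso
      apply hdt.2
      rw [hdJ]
      apply isIntegrable_sum
      intro i hi
      apply isIntegrable_smul
      have h1 : t ≤ s i - 1 := by have := hjmin i hi; omega
      exact isIntegrable_mono (by exact_mod_cast Nat.cast_le.mpr h1) (hleap i).1
    · -- s j < t : derive that δ j is (s j)-integrable, contradicting its leap
      exfalso
      apply (hleap j).2
      have hd' : IsIntegrable k A ((s j : ℕ) : ℕ∞) d :=
        isIntegrable_mono (by exact_mod_cast Nat.cast_le.mpr (by omega : s j ≤ t - 1)) hdt.1
      have hrest : IsIntegrable k A ((s j : ℕ) : ℕ∞) (∑ i ∈ J.erase j, lam i • δ i) := by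
        apply isIntegrable_sum
        intro i hi
        apply isIntegrable_smul
        have hiJ : i ∈ J := Finset.mem_of_mem_erase hi
        have hne : i ≠ j := Finset.ne_of_mem_erase hi
        have hlt' : s j < s i := by
          rcases lt_or_eq_of_le (hjmin i hiJ) with h | h
          · exact h
          · exact absurd (hmono.injective h.symm) (fun hh => hne hh)
        exact isIntegrable_mono (by exact_mod_cast Nat.cast_le.mpr (by omega : s j ≤ s i - 1))
          (hleap i).1
      have hjint : IsIntegrable k A ((s j : ℕ) : ℕ∞) (lam j • δ j) := by
        have heq : lam j • δ j = d - ∑ i ∈ J.erase j, lam i • δ i := by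
          rw [hdJ, ← Finset.add_sum_erase _ _ hjJ, add_sub_cancel_right]
        rw [heq]
        exact isIntegrable_sub hd' hrest
      have hlamj : lam j ∉ 𝔪 := by
        have : lam j ≠ 0 := by simpa [hJ] using hjJ
        rcases hlam j with h | h
        · exact h
        · exact absurd h this
      exact isIntegrable_of_smul_notMem h𝔪 hN hint hlamj hjint

end Leaps
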